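/- Let the characteristic of K be an odd prime p. If π ∈ K[T] is an irreducible polynomial dividing L_n, then for all m, n ≥ 1 with p ∤ m and p ∤ n one has ord_π(L_{mn}) = ord_π(L_n). -/

import Mathlib

/-!
With `G_k(x, y) = ∑_{i<k} x^i y^(k-1-i)`, one has `L_{mn} = L_n · G_m(P^n, Pσ^n)`.
If `π ∣ L_n` then `P^n ≡ Pσ^n` modulo `π`, so the second factor is `≡ m · Pσ^(n(m-1))`.
Here `π ∤ Pσ`, since otherwise `π` would divide `P` as well and hence both `P + Pσ` and `P · Pσ`;
and `m` is a unit because `p ∤ m`. So `π` does not divide the second factor, and the orders agree.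
-/

open Finset Polynomial

section GeomSum

variable {R : Type*} [CommSemiring R]

theorem geom_sum₂_add (x y : R) (a b : ℕ) :
    ∑ i ∈ range (a + b), x ^ i * y ^ (a + b - 1 - i) =
      (∑ i ∈ range a, x ^ i * y ^ (a - 1 - i)) * y ^ b +
        x ^ a * ∑ i ∈ range b, x ^ i * y ^ (b - 1 - i) := by
  rw [sum_range_add, sum_mul, mul_sum]
  congr 1
  · refine sum_congr rfl fun i hi => ?_
    rw [mul_assoc, ← pow_add]
    congr 2
    have := mem_range.mp hi
    omega
  · refine sum_congr rfl fun j _ => ?_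
    rw [pow_add, mul_assoc]
    congr 3
    omega

theorem geom_sum₂_range_mul (x y : R) (m n : ℕ) :
    ∑ i ∈ range (m * n), x ^ i * y ^ (m * n - 1 - i) =
      (∑ i ∈ range n, x ^ i * y ^ (n - 1 - i)) *
        ∑ i ∈ range m, (x ^ n) ^ i * (y ^ n) ^ (m - 1 - i) := by
  induction m with
  | zero => simp
  | succ m ih =>
    rw [Nat.succ_mul, geom_sum₂_add, ih, geom_sum₂_add (x ^ n) (y ^ n) m 1]
    simp only [sum_range_one, pow_one, ← pow_mul]
    ring

end GeomSum

theorem multiplicity_mul_of_not_dvd {α : Type*} [CommMonoidWithZero α] [IsCancelMulZero α]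
    {p a b : α} (hp : Prime p) (hb : ¬p ∣ b) : multiplicity p (a * b) = multiplicity p a :=
  multiplicity_eq_of_emultiplicity_eq <| by
    rw [emultiplicity_mul hp, emultiplicity_eq_zero.mpr hb, add_zero]

section CommRing

variable {R : Type*} [CommRing R] {π : R}

theorem Prime.not_dvd_right_of_dvd_pow_sub_pow {x y : R} {n : ℕ} (hπ : Prime π)
    (hxy : IsCoprime (x + y) (x * y)) (hn : n ≠ 0) (h : π ∣ x ^ n - y ^ n) : ¬π ∣ y := by
  intro hy
  have hx : π ∣ x := hπ.dvd_of_dvd_pow (by simpa using dvd_add h (dvd_pow hy hn))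
  exact hπ.not_isUnit (hxy.isUnit_of_dvd' (dvd_add hx hy) (hx.mul_right y))

theorem Prime.not_dvd_geom_sum₂_of_dvd_sub {a b : R} {m : ℕ} (hπ : Prime π) (hab : π ∣ a - b)
    (hb : ¬π ∣ b) (hm : ¬π ∣ (m : R)) : ¬π ∣ ∑ i ∈ range m, a ^ i * b ^ (m - 1 - i) := by
  have : (Ideal.span {π}).IsPrime := (Ideal.span_singleton_prime hπ.ne_zero).mpr hπ
  let φ := Ideal.Quotient.mk (Ideal.span {π})
  have hφ (c : R) : φ c = 0 ↔ π ∣ c := Ideal.Quotient.eq_zero_iff_dvd π c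
  have hφab : φ a = φ b := sub_eq_zero.mp (by rw [← map_sub, hφ]; exact hab)
  have hφsum : φ (∑ i ∈ range m, a ^ i * b ^ (m - 1 - i)) = φ m * φ b ^ (m - 1) := by
    simp only [map_sum, map_mul, map_pow, hφab, geom_sum₂_self, map_natCast]
  rw [← hφ, hφsum, mul_eq_zero, not_or, hφ, ← map_pow, hφ]
  exact ⟨hm, fun h => hb (hπ.dvd_of_dvd_pow h)⟩

end CommRing

theorem stmt_17_general {K : Type*} [Field K] (p : ℕ) [CharP K p]
    (P : Polynomial K)
    (Pσ : Polynomial K)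
    (hcop : IsCoprime (P + Pσ) (P * Pσ))
    (L : ℕ → Polynomial K)
    (hL : ∀ n, L n = ∑ i ∈ Finset.range n, P ^ i * Pσ ^ (n - 1 - i))
    (π : Polynomial K) (hπ : Irreducible π) :
    ∀ m n : ℕ, 1 ≤ m → 1 ≤ n → ¬ p ∣ m → ¬ p ∣ n → π ∣ L n →
      multiplicity π (L (m * n)) = multiplicity π (L n) := by
  intro m n _ hn hpm _ hdvd
  have hπ' : Prime π := hπ.prime
  have hsub : π ∣ P ^ n - Pσ ^ n := by
    rw [← geom_sum₂_mul, ← hL]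
    exact hdvd.mul_right _
  have hPσ : ¬π ∣ Pσ ^ n := fun h =>
    hπ'.not_dvd_right_of_dvd_pow_sub_pow hcop (by omega) hsub (hπ'.dvd_of_dvd_pow h)
  have hm : ¬π ∣ (m : K[X]) := fun h => hπ.not_isUnit <| isUnit_of_dvd_unit h <| by
    rw [← C_eq_natCast]
    exact isUnit_C.mpr (Ne.isUnit ((CharP.cast_eq_zero_iff K p m).not.mpr hpm))
  rw [hL, hL, geom_sum₂_range_mul,
    multiplicity_mul_of_not_dvd hπ' (hπ'.not_dvd_geom_sum₂_of_dvd_sub hsub hPσ hm)]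

/-- Lemma 2.5 (odd characteristic): if `π` is an irreducible dividing `L_n`, then
for `m, n` coprime to `p` one has `ord_π (L_{mn}) = ord_π (L_n)`. -/
theorem stmt_17 {K : Type*} [Field K] (p : ℕ) (hp : p.Prime) (hodd : Odd p) [CharP K p]
    (σ : K ≃+* K) (hσ : ∀ x, σ (σ x) = x)
    (P : Polynomial K) (hP : P ≠ 0)
    (Pσ : Polynomial K) (hPσ : Pσ = P.map (σ : K →+* K))
    (hne : P ≠ Pσ) (hcop : IsCoprime (P + Pσ) (P * Pσ))
    (L : ℕ → Polynomial K)
    (hL : ∀ n, L n = ∑ i ∈ Finset.range n, P ^ i * Pσ ^ (n - 1 - i))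
    (π : Polynomial K) (hπ : Irreducible π) :
    ∀ m n : ℕ, 1 ≤ m → 1 ≤ n → ¬ p ∣ m → ¬ p ∣ n → π ∣ L n →
      multiplicity π (L (m * n)) = multiplicity π (L n) :=
  stmt_17_general p P Pσ hcop L hL π hπ
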